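/- Let 𝔽 be ℝ or ℂ, let Λ be an infinite index set, and let T : c₀(Λ) → c₀(Λ) be a nonzero linear map. Then the following are equivalent: (a) for all u, v ∈ c₀(Λ), (Tu, Tv) is a TEA pair if and only if (u, v) is a TEA pair; (b) for all u, v ∈ c₀(Λ), (Tu, Tv) is a parallel pair if and only if (u, v) is a parallel pair; (c) there exist γ > 0 and a (not necessarily surjective) linear isometry S : c₀(Λ) → c₀(Λ) such that T = γ S. -/
import Mathlib


open scoped ENNReal

/-- Two vectors in a normed space over `𝕜` form a *parallel pair* if
`‖x + μ • y‖ = ‖x‖ + ‖y‖` for some scalar `μ` with `|μ| = 1`. -/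
def ParallelPair (𝕜 : Type*) {E : Type*} [RCLike 𝕜] [NormedAddCommGroup E] [NormedSpace 𝕜 E]
    (x y : E) : Prop :=
  ∃ μ : 𝕜, ‖μ‖ = 1 ∧ ‖x + μ • y‖ = ‖x‖ + ‖y‖

/-- Two vectors in a normed space form a *triangle equality attaining* (TEA) pair
if `‖x + y‖ = ‖x‖ + ‖y‖`. -/
def TEAPair {E : Type*} [NormedAddCommGroup E] (x y : E) : Prop :=
  ‖x + y‖ = ‖x‖ + ‖y‖

set_option linter.unusedSectionVars false
set_option linter.unusedTactic false
set_option linter.unusedVariables false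
set_option maxHeartbeats 1000000

section ScalarAux

variable {𝕜 : Type*} [RCLike 𝕜]

lemma real_ident_r (u v : ℝ) : |u+v| + |u-v| = 2 * max |u| |v| := by
  rcases abs_cases u with ⟨h1,h2⟩|⟨h1,h2⟩ <;>
  rcases abs_cases v with ⟨h3,h4⟩|⟨h3,h4⟩ <;>
  rcases abs_cases (u+v) with ⟨h5,h6⟩|⟨h5,h6⟩ <;>
  rcases abs_cases (u-v) with ⟨h7,h8⟩|⟨h7,h8⟩ <;>
  rcases max_cases |u| |v| with ⟨h9,h10⟩|⟨h9,h10⟩ <;>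
  linarith


lemma eq_re (hI : (RCLike.I : 𝕜) = 0) (z : 𝕜) : z = ((RCLike.re z : ℝ) : 𝕜) := by
  have := RCLike.re_add_im z
  rw [hI, mul_zero, add_zero] at this
  exact this.symm

lemma real_ident (hI : (RCLike.I : 𝕜) = 0) (u v : 𝕜) :
    ‖u + v‖ + ‖u - v‖ = 2 * max ‖u‖ ‖v‖ := by
  obtain hu := eq_re hI u
  obtain hv := eq_re hI v
  rw [hu, hv, ← RCLike.ofReal_add, ← RCLike.ofReal_sub, RCLike.norm_ofReal, RCLike.norm_ofReal,
    RCLike.norm_ofReal, RCLike.norm_ofReal]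
  exact real_ident_r _ _

lemma real_dichotomy (hI : (RCLike.I : 𝕜) = 0) (e f : 𝕜) (a b : ℝ) (ha : 0 ≤ a) (hb : 0 ≤ b) :
    ‖(a:𝕜) * e + (b:𝕜) * f‖ = a * ‖e‖ + b * ‖f‖ ∨ ‖e - f‖ = ‖e‖ + ‖f‖ := by
  obtain hu := eq_re hI e
  obtain hv := eq_re hI f
  set s := RCLike.re e
  set t := RCLike.re f
  rw [hu, hv, ← RCLike.ofReal_mul, ← RCLike.ofReal_mul, ← RCLike.ofReal_add,
    ← RCLike.ofReal_sub, RCLike.norm_ofReal, RCLike.norm_ofReal, RCLike.norm_ofReal,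
    RCLike.norm_ofReal]
  rcases le_total 0 s with hs|hs <;> rcases le_total 0 t with ht|ht
  · left; rw [abs_of_nonneg hs, abs_of_nonneg ht, abs_of_nonneg (by positivity)]
  · right; rw [abs_of_nonneg hs, abs_of_nonpos ht, abs_of_nonneg (by linarith)]; ring
  · right; rw [abs_of_nonpos hs, abs_of_nonneg ht, abs_of_nonpos (by linarith)]; ring
  · left
    rw [abs_of_nonpos hs, abs_of_nonpos ht, abs_of_nonpos (by nlinarith)]
    ring

lemma sphere_infinite (hI : (RCLike.I : 𝕜) * RCLike.I = -1) : {w : 𝕜 | ‖w‖ = 1}.Infinite := by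
  have hIne : (RCLike.I : 𝕜) ≠ 0 := by
    intro h
    rw [h, mul_zero] at hI
    have h01 : (0:𝕜) ≠ -1 := by norm_num
    exact h01 hI
  have hzne : ∀ t : ℝ, ((1 : 𝕜) + (t:𝕜) * RCLike.I) ≠ 0 := by
    intro t h
    have hre := congrArg RCLike.re h
    simp [RCLike.I_re] at hre
  have hnorm : ∀ t : ℝ, ‖(1 : 𝕜) + (t:𝕜) * RCLike.I‖ > 0 := fun t =>
    norm_pos_iff.mpr (hzne t)
  set F : ℝ → 𝕜 := fun t => (((‖(1:𝕜) + (t:𝕜) * RCLike.I‖)⁻¹ : ℝ) : 𝕜) * ((1:𝕜) + (t:𝕜) * RCLike.I)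
    with hF
  refine Set.infinite_of_injective_forall_mem (f := F) ?_ ?_
  · intro t s hts
    have hret := congrArg RCLike.re hts
    have hct : ∀ u : ℝ, RCLike.re (F u) = (‖(1:𝕜) + (u:𝕜) * RCLike.I‖)⁻¹ := by
      intro u
      show RCLike.re ((((‖(1:𝕜) + (u:𝕜) * RCLike.I‖)⁻¹ : ℝ) : 𝕜) * ((1:𝕜) + (u:𝕜) * RCLike.I))
        = (‖(1:𝕜) + (u:𝕜) * RCLike.I‖)⁻¹
      rw [RCLike.re_ofReal_mul, map_add, RCLike.one_re, RCLike.re_ofReal_mul, RCLike.I_re]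
      ring
    rw [hct t, hct s] at hret
    rw [hF] at hts
    simp only at hts
    rw [hret] at hts
    have hcne : (((‖(1:𝕜) + (s:𝕜) * RCLike.I‖)⁻¹ : ℝ) : 𝕜) ≠ 0 := by
      rw [ne_eq, RCLike.ofReal_eq_zero]
      exact inv_ne_zero (hnorm s).ne'
    have hmc := mul_left_cancel₀ hcne hts
    have h2 : ((t:𝕜) - (s:𝕜)) * RCLike.I = 0 := by
      linear_combination hmc
    rcases mul_eq_zero.mp h2 with h3|h3
    · have : (t:𝕜) = (s:𝕜) := by linear_combination h3
      exact_mod_cast this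
    · exact absurd h3 hIne
  · intro t
    show ‖F t‖ = 1
    rw [hF]
    simp only
    rw [norm_mul, RCLike.norm_ofReal, abs_of_pos (inv_pos.mpr (hnorm t)),
      inv_mul_cancel₀ (hnorm t).ne']

lemma norm_add_mul_sq (w a b : 𝕜) (hw : ‖w‖ = 1) :
    ‖a + w * b‖^2 = ‖a‖^2 + ‖b‖^2 + 2 * RCLike.re (w * (b * (starRingEnd 𝕜) a)) := by
  have h1 : ((‖a + w * b‖ : ℝ) : 𝕜)^2 = (a + w*b) * (starRingEnd 𝕜) (a + w*b) :=
    (RCLike.mul_conj _).symm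
  have h2 : ((‖a‖ : ℝ) : 𝕜)^2 = a * (starRingEnd 𝕜) a := (RCLike.mul_conj _).symm
  have h3 : ((‖b‖ : ℝ) : 𝕜)^2 = b * (starRingEnd 𝕜) b := (RCLike.mul_conj _).symm
  have hww : w * (starRingEnd 𝕜) w = 1 := by
    have h := RCLike.mul_conj w
    rw [hw] at h
    simpa using h
  have hexp : (a + w*b) * (starRingEnd 𝕜) (a + w*b)
      = a * (starRingEnd 𝕜) a + (w * (b * (starRingEnd 𝕜) a))
        + (starRingEnd 𝕜) (w * (b * (starRingEnd 𝕜) a)) + b * (starRingEnd 𝕜) b := by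
    simp only [map_add, map_mul, RCLike.conj_conj]
    linear_combination (b * (starRingEnd 𝕜) b) * hww
  have hmain := congrArg RCLike.re (h1.trans hexp)
  rw [← RCLike.ofReal_pow, RCLike.ofReal_re] at hmain
  rw [hmain, map_add, map_add, map_add]
  have hre : RCLike.re ((starRingEnd 𝕜) (w * (b * (starRingEnd 𝕜) a)))
      = RCLike.re (w * (b * (starRingEnd 𝕜) a)) := RCLike.conj_re _
  have h2' := congrArg RCLike.re h2
  have h3' := congrArg RCLike.re h3
  rw [← RCLike.ofReal_pow, RCLike.ofReal_re] at h2' h3'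
  rw [← h2', ← h3', hre]
  ring

lemma re_const_on_infinite {c : 𝕜} {C : ℝ} {W : Set 𝕜}
    (hW : W.Infinite) (hsub : ∀ w ∈ W, ‖w‖ = 1 ∧ RCLike.re (w * c) = C) :
    c = 0 ∧ C = 0 := by
  have hc : c = 0 := by
    by_contra hc
    have hinj : Set.InjOn (fun w => w * c) W := fun w₁ _ w₂ _ h =>
      mul_right_cancel₀ hc h
    have himg : (fun w => w * c) '' W ⊆
        {z : 𝕜 | ‖z‖ = ‖c‖ ∧ RCLike.re z = C} := by
      rintro z ⟨w, hw, rfl⟩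
      obtain ⟨hw1, hw2⟩ := hsub w hw
      exact ⟨by rw [norm_mul, hw1, one_mul], hw2⟩
    have hfin : {z : 𝕜 | ‖z‖ = ‖c‖ ∧ RCLike.re z = C}.Finite := by
      set r := Real.sqrt (‖c‖^2 - C^2) with hr
      have hsub2 : {z : 𝕜 | ‖z‖ = ‖c‖ ∧ RCLike.re z = C} ⊆
          {((C:ℝ):𝕜) + (r:𝕜) * RCLike.I, ((C:ℝ):𝕜) + ((-r:ℝ):𝕜) * RCLike.I} := by
        rintro z ⟨h1, h2⟩
        have hsq : (RCLike.im z)^2 = ‖c‖^2 - C^2 := by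
          have hns := RCLike.norm_sq_eq_def (z := z)
          rw [h1, h2] at hns
          nlinarith
        have hrsq : r^2 = ‖c‖^2 - C^2 := by
          rw [hr]
          exact Real.sq_sqrt (by nlinarith [sq_nonneg (RCLike.im z)])
        have him : RCLike.im z = r ∨ RCLike.im z = -r := by
          have h := hsq.trans hrsq.symm
          rcases sq_eq_sq_iff_eq_or_eq_neg.mp h with h'|h'
          · exact Or.inl h'
          · exact Or.inr h'
        rcases him with h'|h'
        · left
          rw [← RCLike.re_add_im z, h2, h']
        · right
          rw [← RCLike.re_add_im z, h2, h']
          push_cast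
          ring_nf
          exact Set.mem_singleton _
      exact ((Set.finite_singleton _).insert _).subset hsub2
    exact (hW.image hinj) (hfin.subset himg)
  subst hc
  obtain ⟨w, hw⟩ := hW.nonempty
  obtain ⟨-, h2⟩ := hsub w hw
  rw [mul_zero, map_zero] at h2
  exact ⟨rfl, h2.symm⟩


end ScalarAux

namespace C0Aux

variable {𝕜 : Type*} [RCLike 𝕜] {Λ : Type*} [TopologicalSpace Λ] [DiscreteTopology Λ]

local notation "C₀" => ZeroAtInftyContinuousMap Λ 𝕜

lemma coord_le (x : C₀) (ν : Λ) : ‖x ν‖ ≤ ‖x‖ := by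
  have := BoundedContinuousFunction.norm_coe_le_norm x.toBCF ν
  simpa [ZeroAtInftyContinuousMap.norm_toBCF_eq_norm] using this

lemma norm_le_of (x : C₀) {C : ℝ} (hC : 0 ≤ C) (h : ∀ ν, ‖x ν‖ ≤ C) : ‖x‖ ≤ C := by
  rw [← ZeroAtInftyContinuousMap.norm_toBCF_eq_norm]
  exact (BoundedContinuousFunction.norm_le hC).mpr h

lemma finite_ge (x : C₀) {ε : ℝ} (hε : 0 < ε) : {ν : Λ | ε ≤ ‖x ν‖}.Finite := by
  have hx := x.zero_at_infty'
  have : Metric.ball (0:𝕜) ε ∈ nhds (0:𝕜) := Metric.ball_mem_nhds _ hε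
  have hmem : x ⁻¹' (Metric.ball (0:𝕜) ε) ∈ Filter.cocompact Λ := hx this
  obtain ⟨K, hK, hsub⟩ := Filter.mem_cocompact.mp hmem
  have hKfin : K.Finite := hK.finite_of_discrete
  refine hKfin.subset fun ν hν => ?_
  by_contra hnK
  have := hsub hnK
  simp only [Set.mem_preimage, Metric.mem_ball, dist_zero_right] at this
  exact absurd (lt_of_le_of_lt hν this) (lt_irrefl _)

/-- The set of coordinates where `x` attains its norm. -/
def Mset (x : C₀) : Set Λ := {ν | ‖x ν‖ = ‖x‖}

lemma Mset_finite {x : C₀} (hx : x ≠ 0) : (Mset x).Finite := by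
  have h0 : 0 < ‖x‖ := norm_pos_iff.mpr hx
  refine (finite_ge x (half_pos h0)).subset fun ν hν => ?_
  simp only [Mset, Set.mem_setOf_eq] at hν
  simp only [Set.mem_setOf_eq, hν]
  linarith

lemma Mset_nonempty {x : C₀} (hx : x ≠ 0) : (Mset x).Nonempty := by
  have h0 : 0 < ‖x‖ := norm_pos_iff.mpr hx
  have hfin : {ν : Λ | ‖x‖/2 ≤ ‖x ν‖}.Finite := finite_ge x (half_pos h0)
  have hne : {ν : Λ | ‖x‖/2 ≤ ‖x ν‖}.Nonempty := by
    by_contra hemp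
    rw [Set.not_nonempty_iff_eq_empty] at hemp
    have : ‖x‖ ≤ ‖x‖/2 := by
      refine norm_le_of x (by linarith) fun ν => ?_
      by_contra hlt
      push_neg at hlt
      have : ν ∈ {ν : Λ | ‖x‖/2 ≤ ‖x ν‖} := hlt.le
      rw [hemp] at this
      exact this
    linarith
  obtain ⟨ν₀, hν₀, hmax⟩ := Set.exists_max_image _ (fun ν => ‖x ν‖) hfin hne
  refine ⟨ν₀, le_antisymm (coord_le x ν₀) ?_⟩
  refine norm_le_of x (norm_nonneg _) fun ν => ?_
  by_cases hν : ν ∈ {ν : Λ | ‖x‖/2 ≤ ‖x ν‖}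
  · exact hmax ν hν
  · simp only [Set.mem_setOf_eq, not_le] at hν
    exact hν.le.trans (hν₀ : ‖x‖/2 ≤ ‖x ν₀‖)


/-- coordinate vector -/
noncomputable def ee (lam : Λ) : ZeroAtInftyContinuousMap Λ 𝕜 :=
  letI := Classical.decEq Λ
  { toFun := fun ν => if ν = lam then (1:𝕜) else 0
    continuous_toFun := continuous_of_discreteTopology
    zero_at_infty' := by
      have h : ∀ᶠ ν in Filter.cocompact Λ, (if ν = lam then (1:𝕜) else 0) = 0 := by
        rw [Filter.eventually_iff, Filter.mem_cocompact]
        exact ⟨{lam}, isCompact_singleton, fun ν hν => by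
          simp only [Set.mem_compl_iff, Set.mem_singleton_iff] at hν
          simp [hν]⟩
      exact Filter.Tendsto.congr' (Filter.EventuallyEq.symm h) tendsto_const_nhds }

lemma ee_self (lam : Λ) : (ee lam : ZeroAtInftyContinuousMap Λ 𝕜) lam = 1 := by
  letI := Classical.decEq Λ
  show (if lam = lam then (1:𝕜) else 0) = 1
  simp

lemma ee_ne {lam ν : Λ} (h : ν ≠ lam) : (ee lam : ZeroAtInftyContinuousMap Λ 𝕜) ν = 0 := by
  letI := Classical.decEq Λ
  show (if ν = lam then (1:𝕜) else 0) = 0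
  simp [h]

lemma norm_ee (lam : Λ) : ‖(ee lam : ZeroAtInftyContinuousMap Λ 𝕜)‖ = 1 := by
  refine le_antisymm (norm_le_of _ zero_le_one fun ν => ?_) ?_
  · by_cases h : ν = lam
    · subst h; rw [ee_self]; simp
    · rw [ee_ne h]; simp
  · have := coord_le (𝕜 := 𝕜) (ee lam) lam
    rwa [ee_self, norm_one] at this

lemma ee_ne_zero (lam : Λ) : (ee lam : ZeroAtInftyContinuousMap Λ 𝕜) ≠ 0 := by
  intro h
  have := norm_ee (𝕜 := 𝕜) lam
  rw [h] at this
  simp at this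

lemma Mset_ee (lam : Λ) : Mset (ee lam : ZeroAtInftyContinuousMap Λ 𝕜) = {lam} := by
  ext ν
  simp only [Mset, Set.mem_setOf_eq, Set.mem_singleton_iff, norm_ee]
  constructor
  · intro h
    by_contra hne
    rw [ee_ne hne] at h
    simp at h
  · intro h; subst h; rw [ee_self]; simp


lemma par_of_mem {x y : ZeroAtInftyContinuousMap Λ 𝕜} (hx : x ≠ 0) (hy : y ≠ 0)
    (h : (Mset x ∩ Mset y).Nonempty) : ParallelPair 𝕜 x y := by
  obtain ⟨lam, hlx, hly⟩ := h
  have hlx : ‖x lam‖ = ‖x‖ := hlx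
  have hly : ‖y lam‖ = ‖y‖ := hly
  set a := x lam with ha
  set b := y lam with hb
  have hxn : 0 < ‖x‖ := norm_pos_iff.mpr hx
  have hyn : 0 < ‖y‖ := norm_pos_iff.mpr hy
  have han : 0 < ‖a‖ := by rw [hlx]; exact hxn
  have hbn : 0 < ‖b‖ := by rw [hly]; exact hyn
  set μ : 𝕜 := (a * (starRingEnd 𝕜) b) / ((‖a‖ : 𝕜) * (‖b‖ : 𝕜)) with hμdef
  have hμ : ‖μ‖ = 1 := by
    rw [hμdef, norm_div, norm_mul, RCLike.norm_conj, norm_mul, RCLike.norm_ofReal,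
      RCLike.norm_ofReal, abs_of_pos han, abs_of_pos hbn]
    field_simp
  have hA : ((‖a‖ : ℝ) : 𝕜) ≠ 0 := by
    rw [ne_eq, RCLike.ofReal_eq_zero]; exact han.ne'
  have hB : ((‖b‖ : ℝ) : 𝕜) ≠ 0 := by
    rw [ne_eq, RCLike.ofReal_eq_zero]; exact hbn.ne'
  have hbb : b * (starRingEnd 𝕜) b = (((‖b‖:ℝ)^2 : ℝ) : 𝕜) := by
    rw [RCLike.mul_conj b]; push_cast; ring
  have hμb : μ * b = a * ((‖b‖ / ‖a‖ : ℝ) : 𝕜) := by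
    rw [hμdef, RCLike.ofReal_div, div_mul_eq_mul_div, mul_assoc,
      mul_comm ((starRingEnd 𝕜) b) b, hbb]
    push_cast
    field_simp
  have hkey : ‖a + μ * b‖ = ‖x‖ + ‖y‖ := by
    rw [hμb]
    have : a + a * ((‖b‖ / ‖a‖ : ℝ) : 𝕜) = a * ((1 + ‖b‖ / ‖a‖ : ℝ) : 𝕜) := by
      push_cast; ring
    rw [this, norm_mul, RCLike.norm_ofReal, abs_of_pos (by positivity), mul_add, mul_one,
      mul_div_cancel₀ _ han.ne', hlx, hly]
  refine ⟨μ, hμ, le_antisymm ?_ ?_⟩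
  · calc ‖x + μ • y‖ ≤ ‖x‖ + ‖μ • y‖ := norm_add_le _ _
      _ = ‖x‖ + ‖y‖ := by rw [norm_smul μ y, hμ, one_mul]
  · have := coord_le (x + μ • y) lam
    rw [ZeroAtInftyContinuousMap.add_apply, ZeroAtInftyContinuousMap.smul_apply,
      smul_eq_mul] at this
    rw [← hkey]
    exact le_trans (le_of_eq rfl) this

lemma mem_of_par {x y : ZeroAtInftyContinuousMap Λ 𝕜} (hx : x ≠ 0) (hy : y ≠ 0)
    (h : ParallelPair 𝕜 x y) : (Mset x ∩ Mset y).Nonempty := by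
  obtain ⟨μ, hμ, hpar⟩ := h
  have hz : x + μ • y ≠ 0 := by
    intro h0
    rw [h0, norm_zero] at hpar
    have := norm_pos_iff.mpr hx
    have := norm_nonneg y
    linarith
  obtain ⟨lam, hlam⟩ := Mset_nonempty hz
  have hlam : ‖(x + μ • y) lam‖ = ‖x + μ • y‖ := hlam
  rw [hpar] at hlam
  have hco : (x + μ • y) lam = x lam + μ * y lam := by
    rw [ZeroAtInftyContinuousMap.add_apply, ZeroAtInftyContinuousMap.smul_apply, smul_eq_mul]
  rw [hco] at hlam
  have h1 : ‖x lam + μ * y lam‖ ≤ ‖x lam‖ + ‖y lam‖ := by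
    calc ‖x lam + μ * y lam‖ ≤ ‖x lam‖ + ‖μ * y lam‖ := norm_add_le _ _
      _ = ‖x lam‖ + ‖y lam‖ := by rw [norm_mul, hμ, one_mul]
  have h2 := coord_le x lam
  have h3 := coord_le y lam
  exact ⟨lam, show ‖x lam‖ = ‖x‖ by linarith, show ‖y lam‖ = ‖y‖ by linarith⟩

lemma par_zero_left (y : ZeroAtInftyContinuousMap Λ 𝕜) : ParallelPair 𝕜 0 y :=
  ⟨1, norm_one, by simp⟩


lemma mem_Mset_iff {x : C₀} {ν : Λ} : ν ∈ Mset x ↔ ‖x ν‖ = ‖x‖ := Iff.rfl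

lemma add_smul_apply (x y : C₀) (s : 𝕜) (ν : Λ) : (x + s•y) ν = x ν + s * y ν := by
  rw [ZeroAtInftyContinuousMap.add_apply, ZeroAtInftyContinuousMap.smul_apply, smul_eq_mul]

lemma half (hI : (RCLike.I : 𝕜) = 0) {x y : C₀}
    (hxx : ∀ s s' : 𝕜, ‖s‖ ≤ 1 → ‖s'‖ ≤ 1 → (Mset (x + s•y) ∩ Mset (x + s'•y)).Nonempty)
    (hnoty : ∀ s : 𝕜, ‖s‖ < 1 → (Mset (x + s•y) ∩ Mset y) = ∅)
    {δ : ℝ} (hδ0 : 0 < δ) (hδ1 : δ < 1) :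
    ∃ p, ‖x p‖ = ‖x‖ ∧ ‖x p + y p‖ = ‖x + y‖ ∧
      ‖x - y‖ - 2*δ*‖y‖ ≤ ‖x p - y p‖ ∧ ‖x p - y p‖ ≤ ‖x - y‖ := by
  set s₀ : 𝕜 := ((δ - 1 : ℝ) : 𝕜) with hs₀def
  have hs₀ : ‖s₀‖ = 1 - δ := by
    rw [hs₀def, RCLike.norm_ofReal, abs_of_neg (by linarith)]
    ring
  obtain ⟨p, hp1, hp2⟩ := hxx s₀ 1 (by rw [hs₀]; linarith) (by simp)
  rw [one_smul] at hp2
  rw [mem_Mset_iff, add_smul_apply] at hp1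
  rw [mem_Mset_iff, ZeroAtInftyContinuousMap.add_apply] at hp2
  -- hp1 : ‖x p + s₀ * y p‖ = ‖x + s₀•y‖ ; hp2 : ‖x p + y p‖ = ‖x + y‖
  have h2δ : (2 - δ : ℝ) ≠ 0 := by linarith
  have h2δK : ((2:𝕜) - ((δ:ℝ):𝕜)) ≠ 0 := by
    rw [show ((2:𝕜) - ((δ:ℝ):𝕜)) = ((2 - δ : ℝ) : 𝕜) by push_cast; ring,
      ne_eq, RCLike.ofReal_eq_zero]
    exact h2δ
  set α : ℝ := 1/(2-δ) with hα
  set β : ℝ := (1-δ)/(2-δ) with hβ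
  have hα0 : 0 ≤ α := by
    rw [hα]; exact div_nonneg zero_le_one (by linarith)
  have hβ0 : 0 ≤ β := by
    rw [hβ]; exact div_nonneg (by linarith) (by linarith)
  set e : 𝕜 := x p + s₀ * y p with he
  set f : 𝕜 := x p + y p with hf
  have hcomb : (α:𝕜) * e + (β:𝕜) * f = x p := by
    rw [he, hf, hs₀def, hα, hβ]
    push_cast
    field_simp
    ring
  have hvec : (α:𝕜)•(x + s₀•y) + (β:𝕜)•(x + y) = x := by
    rw [hα, hβ, hs₀def]
    match_scalars
    · push_cast
      field_simp
      try ring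
    · push_cast
      field_simp
      try ring
  have hxle : ‖x‖ ≤ α * ‖x + s₀•y‖ + β * ‖x + y‖ := by
    calc ‖x‖ = ‖(α:𝕜)•(x + s₀•y) + (β:𝕜)•(x + y)‖ := by rw [hvec]
      _ ≤ ‖(α:𝕜)•(x + s₀•y)‖ + ‖(β:𝕜)•(x + y)‖ := norm_add_le _ _
      _ = α * ‖x + s₀•y‖ + β * ‖x + y‖ := by
          rw [norm_smul ((α:ℝ):𝕜) (x + s₀•y), norm_smul ((β:ℝ):𝕜) (x + y),
            RCLike.norm_ofReal, RCLike.norm_ofReal, abs_of_nonneg hα0, abs_of_nonneg hβ0]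
  rcases real_dichotomy hI e f α β hα0 hβ0 with hcase|hcase
  · -- aligned case
    have h1 : ‖x p‖ = α * ‖x + s₀•y‖ + β * ‖x + y‖ := by
      rw [← hcomb, hcase, hp1, hp2]
    have h3 := coord_le x p
    have hxp : ‖x p‖ = ‖x‖ := by linarith
    refine ⟨p, hxp, hp2, ?_, ?_⟩
    · -- lower bound for ‖x p - y p‖
      have hdiff : e - (x p - y p) = ((δ:ℝ):𝕜) * y p := by
        rw [he, hs₀def]; push_cast; ring
      have habs1 := abs_norm_sub_norm_le e (x p - y p)
      rw [hdiff, norm_mul, RCLike.norm_ofReal, abs_of_pos hδ0] at habs1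
      have hd1 := (abs_le.mp habs1).2
      -- ‖e‖ - δ‖y p‖ ≤ ‖x p - y p‖  (from -(δ‖y p‖) ≤ ‖e‖ - ‖x p - y p‖ rearranged)
      have hdiff2 : (x + s₀•y) - (x - y) = ((δ:ℝ):𝕜) • y := by
        rw [hs₀def]
        match_scalars
        · ring
        · push_cast; ring
      have habs2 := abs_norm_sub_norm_le (x + s₀•y) (x - y)
      rw [hdiff2, norm_smul ((δ:ℝ):𝕜) y, RCLike.norm_ofReal, abs_of_pos hδ0] at habs2
      have hd2 := (abs_le.mp habs2).1
      have hyple := coord_le y p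
      have hmul : δ * ‖y p‖ ≤ δ * ‖y‖ := mul_le_mul_of_nonneg_left hyple hδ0.le
      rw [hp1] at hd1
      linarith
    · have hsub := coord_le (x - y) p
      rwa [ZeroAtInftyContinuousMap.sub_apply] at hsub
  · -- anti-aligned case: contradiction
    exfalso
    have hef : e - f = (s₀ - 1) * y p := by rw [he, hf]; ring
    have hcast : s₀ - 1 = ((δ - 2 : ℝ):𝕜) := by rw [hs₀def]; push_cast; ring
    have hnormc : ‖s₀ - 1‖ = 2 - δ := by
      rw [hcast, RCLike.norm_ofReal, abs_of_neg (by linarith)]; ring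
    have hnorm_ef : ‖e - f‖ = (2 - δ) * ‖y p‖ := by
      rw [hef, norm_mul, hnormc]
    have hz12 : (x + s₀•y) - (x + y) = (s₀ - 1) • y := by
      match_scalars <;> ring
    have htri : ‖(x + s₀•y) - (x + y)‖ ≤ ‖x + s₀•y‖ + ‖x + y‖ := norm_sub_le _ _
    rw [hz12, norm_smul (s₀ - 1) y, hnormc] at htri
    rw [hcase, hp1, hp2] at hnorm_ef
    have hyp : ‖y‖ ≤ ‖y p‖ := by nlinarith
    have hypmem : p ∈ Mset (x + s₀•y) ∩ Mset y := by
      constructor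
      · rw [mem_Mset_iff, add_smul_apply]
        exact hp1
      · exact le_antisymm (coord_le y p) hyp
    have hemp := hnoty s₀ (by rw [hs₀]; linarith)
    rw [hemp] at hypmem
    exact hypmem

lemma twoD {x y : ZeroAtInftyContinuousMap Λ 𝕜} (hx : x ≠ 0) (hy : y ≠ 0)
    (hxx : ∀ s s' : 𝕜, ‖s‖ ≤ 1 → ‖s'‖ ≤ 1 → (Mset (x + s•y) ∩ Mset (x + s'•y)).Nonempty)
    (hyy : ∀ s s' : 𝕜, ‖s‖ ≤ 1 → ‖s'‖ ≤ 1 → (Mset (s•x + y) ∩ Mset (s'•x + y)).Nonempty)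
    (hnot : ∀ s s' : 𝕜, ‖s‖ < 1 → ‖s'‖ < 1 → (Mset (x + s•y) ∩ Mset (s'•x + y)) = ∅)
    (hbd : ∀ w : 𝕜, ‖w‖ = 1 → (Mset y ∩ Mset (x + w•y)).Nonempty) :
    ‖x‖ = ‖y‖ := by
  have h00 : Mset x ∩ Mset y = ∅ := by
    have h := hnot 0 0 (by simp) (by simp)
    rwa [zero_smul, add_zero, zero_smul, zero_add] at h
  have hqnotx : ∀ q ∈ Mset y, ‖x q‖ < ‖x‖ := by
    intro q hq
    refine lt_of_le_of_ne (coord_le x q) fun heq => ?_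
    have : q ∈ Mset x ∩ Mset y := ⟨heq, hq⟩
    rw [h00] at this
    exact this
  have hpnoty : ∀ p ∈ Mset x, ‖y p‖ < ‖y‖ := by
    intro p hp
    refine lt_of_le_of_ne (coord_le y p) fun heq => ?_
    have : p ∈ Mset x ∩ Mset y := ⟨hp, heq⟩
    rw [h00] at this
    exact this
  rcases RCLike.I_mul_I_ax (K := 𝕜) with hI|hI
  · -- real case
    have hnoty : ∀ s : 𝕜, ‖s‖ < 1 → (Mset (x + s•y) ∩ Mset y) = ∅ := by
      intro s hs
      have h := hnot s 0 hs (by simp)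
      rwa [zero_smul, zero_add] at h
    have hxx' : ∀ s s' : 𝕜, ‖s‖ ≤ 1 → ‖s'‖ ≤ 1 →
        (Mset (y + s•x) ∩ Mset (y + s'•x)).Nonempty := by
      intro s s' hs hs'
      have h := hyy s s' hs hs'
      rwa [add_comm (s•x) y, add_comm (s'•x) y] at h
    have hnoty' : ∀ s : 𝕜, ‖s‖ < 1 → (Mset (y + s•x) ∩ Mset x) = ∅ := by
      intro s hs
      have h := hnot 0 s (by simp) hs
      rw [zero_smul, add_zero, add_comm (s•x) y] at h
      rw [Set.inter_comm]
      exact h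
    -- finite strict bounds
    obtain ⟨p₀, hp₀, hp₀max⟩ := Set.exists_max_image (Mset x) (fun p => ‖y p‖)
      (Mset_finite hx) (Mset_nonempty hx)
    obtain ⟨q₀, hq₀, hq₀max⟩ := Set.exists_max_image (Mset y) (fun q => ‖x q‖)
      (Mset_finite hy) (Mset_nonempty hy)
    set B := ‖y p₀‖ with hBdef
    set C := ‖x q₀‖ with hCdef
    have hBlt : B < ‖y‖ := hpnoty p₀ hp₀
    have hClt : C < ‖x‖ := hqnotx q₀ hq₀
    have hyB : ∀ p ∈ Mset x, ‖y p‖ ≤ B := hp₀max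
    have hxC : ∀ q ∈ Mset y, ‖x q‖ ≤ C := hq₀max
    by_contra hne0
    set ε₀ := |‖x‖ - ‖y‖| with hε₀def
    have hε₀ : 0 < ε₀ := abs_pos.mpr (sub_ne_zero.mpr hne0)
    set K := ‖x‖ + ‖y‖ with hKdef
    have hK : 0 < K := by
      have := norm_pos_iff.mpr hx
      have := norm_nonneg y
      rw [hKdef]; linarith
    set G := min (‖y‖ - B) (‖x‖ - C) with hGdef
    have hG : 0 < G := lt_min (by linarith) (by linarith)
    have hGε : 0 < min G ε₀ := lt_min hG hε₀
    obtain ⟨δ, hδ0, hδ1, hδG, hδε⟩ : ∃ δ : ℝ, 0 < δ ∧ δ < 1 ∧ δ * K < G ∧ δ * K < ε₀ := by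
      refine ⟨min (1/2) (min G ε₀ / (2*K)), lt_min (by norm_num) (by positivity),
        lt_of_le_of_lt (min_le_left _ _) (by norm_num), ?_, ?_⟩
      · have h1 : min (1/2) (min G ε₀ / (2*K)) ≤ min G ε₀ / (2*K) := min_le_right _ _
        have h2 : min (1/2) (min G ε₀ / (2*K)) * K ≤ min G ε₀ / (2*K) * K :=
          mul_le_mul_of_nonneg_right h1 hK.le
        have h3 : min G ε₀ / (2*K) * K = min G ε₀ / 2 := by field_simp
        have h4 : min G ε₀ ≤ G := min_le_left _ _
        nlinarith
      · have h1 : min (1/2) (min G ε₀ / (2*K)) ≤ min G ε₀ / (2*K) := min_le_right _ _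
        have h2 : min (1/2) (min G ε₀ / (2*K)) * K ≤ min G ε₀ / (2*K) * K :=
          mul_le_mul_of_nonneg_right h1 hK.le
        have h3 : min G ε₀ / (2*K) * K = min G ε₀ / 2 := by field_simp
        have h4 : min G ε₀ ≤ ε₀ := min_le_right _ _
        nlinarith
    obtain ⟨p, hxp, hp2, hp3, hp4⟩ := half hI hxx hnoty hδ0 hδ1
    obtain ⟨q, hyq, hq2, hq3, hq4⟩ := half hI hxx' hnoty' hδ0 hδ1
    rw [add_comm y x] at hq2
    rw [norm_sub_rev y x] at hq3 hq4
    have Ip := real_ident hI (x p) (y p)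
    have Iq := real_ident hI (y q) (x q)
    have hpMx : p ∈ Mset x := hxp
    have hqMy : q ∈ Mset y := hyq
    have hbp := hyB p hpMx
    have hcq := hxC q hqMy
    have hδy : δ * ‖y‖ ≤ δ * K := by
      have := norm_nonneg x
      apply mul_le_mul_of_nonneg_left _ hδ0.le
      rw [hKdef]; linarith
    have hδx : δ * ‖x‖ ≤ δ * K := by
      have := norm_nonneg y
      apply mul_le_mul_of_nonneg_left _ hδ0.le
      rw [hKdef]; linarith
    -- interval bounds on the two maxima
    have hPup : 2 * max ‖x p‖ ‖y p‖ ≤ ‖x + y‖ + ‖x - y‖ := by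
      rw [← Ip, hp2]; linarith
    have hPlo : ‖x + y‖ + ‖x - y‖ - 2*(δ*K) ≤ 2 * max ‖x p‖ ‖y p‖ := by
      rw [← Ip, hp2]; nlinarith
    have hQup : 2 * max ‖y q‖ ‖x q‖ ≤ ‖x + y‖ + ‖x - y‖ := by
      rw [← Iq, hq2]; linarith
    have hQlo : ‖x + y‖ + ‖x - y‖ - 2*(δ*K) ≤ 2 * max ‖y q‖ ‖x q‖ := by
      rw [← Iq, hq2]; nlinarith
    rcases max_cases ‖x p‖ ‖y p‖ with ⟨hP, hPc⟩|⟨hP, hPc⟩ <;>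
      rcases max_cases ‖y q‖ ‖x q‖ with ⟨hQ, hQc⟩|⟨hQ, hQc⟩ <;>
      rw [hP] at hPup hPlo <;> rw [hQ] at hQup hQlo
    · -- main case : |‖x‖ - ‖y‖| ≤ δK < ε₀
      rw [hxp] at hPup hPlo
      rw [hyq] at hQup hQlo
      rcases abs_cases (‖x‖ - ‖y‖) with ⟨hab, _⟩|⟨hab, _⟩ <;>
        rw [hε₀def] at hδε <;> rw [hab] at hδε <;> linarith
    · rw [hxp] at hPup hPlo
      have h1 : G ≤ ‖x‖ - C := min_le_right _ _
      linarith
    · rw [hyq] at hQup hQlo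
      have h1 : G ≤ ‖y‖ - B := min_le_left _ _
      linarith
    · rw [hxp] at hPc
      rw [hyq] at hQc
      linarith
  · -- complex case
    have hW := sphere_infinite hI
    have hexists : ∃ p ∈ Mset x, ∃ q ∈ Mset y,
        {w : 𝕜 | ‖w‖ = 1 ∧ p ∈ Mset (x + w•y) ∧ q ∈ Mset (x + w•y)}.Infinite := by
      by_contra hcon
      push_neg at hcon
      apply hW
      have hcover : {w : 𝕜 | ‖w‖ = 1} ⊆ ⋃ p ∈ Mset x, ⋃ q ∈ Mset y,
          {w : 𝕜 | ‖w‖ = 1 ∧ p ∈ Mset (x + w•y) ∧ q ∈ Mset (x + w•y)} := by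
        intro w hw
        have hw1 : ‖w‖ = 1 := hw
        obtain ⟨p, hp⟩ := hxx 0 w (by simp) (le_of_eq hw1)
        rw [zero_smul, add_zero] at hp
        obtain ⟨q, hq⟩ := hbd w hw1
        exact Set.mem_biUnion hp.1 (Set.mem_biUnion hq.1 ⟨hw1, hp.2, hq.2⟩)
      exact ((Mset_finite hx).biUnion fun p hp =>
        (Mset_finite hy).biUnion fun q hq => hcon p hp q hq).subset hcover
    obtain ⟨p, hpMx, q, hqMy, hWinf⟩ := hexists
    have hre : ∀ w ∈ {w : 𝕜 | ‖w‖ = 1 ∧ p ∈ Mset (x + w•y) ∧ q ∈ Mset (x + w•y)},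
        ‖w‖ = 1 ∧ RCLike.re (w * (y p * (starRingEnd 𝕜) (x p) - y q * (starRingEnd 𝕜) (x q)))
          = (‖x q‖^2 + ‖y q‖^2 - ‖x p‖^2 - ‖y p‖^2)/2 := by
      rintro w ⟨hw1, hwp, hwq⟩
      refine ⟨hw1, ?_⟩
      rw [mem_Mset_iff, add_smul_apply] at hwp hwq
      have h1 := norm_add_mul_sq w (x p) (y p) hw1
      have h2 := norm_add_mul_sq w (x q) (y q) hw1
      have heq : ‖x p + w * y p‖^2 = ‖x q + w * y q‖^2 := by rw [hwp, hwq]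
      rw [h1, h2] at heq
      rw [mul_sub, map_sub]
      linarith
    obtain ⟨hc, hC⟩ := re_const_on_infinite hWinf hre
    have hcp : y p * (starRingEnd 𝕜) (x p) = y q * (starRingEnd 𝕜) (x q) :=
      sub_eq_zero.mp hc
    have hprod : ‖y p‖ * ‖x p‖ = ‖y q‖ * ‖x q‖ := by
      have := congrArg norm hcp
      rwa [norm_mul, norm_mul, RCLike.norm_conj, RCLike.norm_conj] at this
    have hsum : ‖x p‖^2 + ‖y p‖^2 = ‖x q‖^2 + ‖y q‖^2 := by
      have h2 : (‖x q‖^2 + ‖y q‖^2 - ‖x p‖^2 - ‖y p‖^2)/2 = 0 := hC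
      linarith
    have hfactor : (‖x p‖^2 - ‖x q‖^2) * (‖x p‖^2 - ‖y q‖^2) = 0 := by
      linear_combination (‖x p‖^2) * hsum -
        (‖x p‖ * ‖y p‖ + ‖x q‖ * ‖y q‖) * hprod
    have hxpn : ‖x p‖ = ‖x‖ := hpMx
    have hyqn : ‖y q‖ = ‖y‖ := hqMy
    have hclt : ‖x q‖ < ‖x‖ := hqnotx q hqMy
    rcases mul_eq_zero.mp hfactor with h|h
    · exfalso
      rw [hxpn] at h
      have h1 : ‖x q‖ ≥ 0 := norm_nonneg _
      nlinarith
    · rw [hxpn, hyqn] at h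
      have h1 : 0 ≤ ‖x‖ := norm_nonneg _
      have h2 : 0 ≤ ‖y‖ := norm_nonneg _
      nlinarith



lemma smul_add_apply (x y : ZeroAtInftyContinuousMap Λ 𝕜) (s : 𝕜) (ν : Λ) :
    (s•x + y) ν = s * x ν + y ν := by
  rw [ZeroAtInftyContinuousMap.add_apply, ZeroAtInftyContinuousMap.smul_apply, smul_eq_mul]

lemma ne_zero_of_coord {x : ZeroAtInftyContinuousMap Λ 𝕜} {ν : Λ} (h : x ν ≠ 0) : x ≠ 0 := by
  intro h0
  rw [h0, ZeroAtInftyContinuousMap.zero_apply] at h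
  exact h rfl

section Core

variable [Infinite Λ]
variable (T : ZeroAtInftyContinuousMap Λ 𝕜 →ₗ[𝕜] ZeroAtInftyContinuousMap Λ 𝕜)

lemma inj_of_par (hb : ∀ u v, ParallelPair 𝕜 (T u) (T v) ↔ ParallelPair 𝕜 u v) :
    ∀ u, T u = 0 → u = 0 := by
  intro u hTu
  by_contra hu
  have hfin := Mset_finite (x := u) hu
  obtain ⟨lam, hlam⟩ := hfin.infinite_compl.nonempty
  have hpar : ParallelPair 𝕜 (T u) (T (ee lam)) := by
    rw [hTu]; exact par_zero_left _
  have hp := (hb _ _).mp hpar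
  obtain ⟨ν, hν1, hν2⟩ := mem_of_par hu (ee_ne_zero lam) hp
  rw [Mset_ee] at hν2
  rw [Set.mem_singleton_iff] at hν2
  subst hν2
  exact hlam hν1

lemma hM_transfer (hb : ∀ u v, ParallelPair 𝕜 (T u) (T v) ↔ ParallelPair 𝕜 u v)
    (hinj : ∀ u, T u = 0 → u = 0) {u v : ZeroAtInftyContinuousMap Λ 𝕜}
    (hu : u ≠ 0) (hv : v ≠ 0) :
    (Mset (T u) ∩ Mset (T v)).Nonempty ↔ (Mset u ∩ Mset v).Nonempty := by
  have hTu : T u ≠ 0 := fun h => hu (hinj u h)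
  have hTv : T v ≠ 0 := fun h => hv (hinj v h)
  constructor
  · intro h
    exact mem_of_par hu hv ((hb u v).mp (par_of_mem hTu hTv h))
  · intro h
    exact mem_of_par hTu hTv ((hb u v).mpr (par_of_mem hu hv h))

lemma normA (hb : ∀ u v, ParallelPair 𝕜 (T u) (T v) ↔ ParallelPair 𝕜 u v)
    (hinj : ∀ u, T u = 0 → u = 0) {u₀ : ZeroAtInftyContinuousMap Λ 𝕜} {μ : Λ}
    (hu₀ : u₀ ≠ 0) (h0 : u₀ μ = 0) :
    ‖T u₀‖ = ‖u₀‖ * ‖T (ee μ)‖ := by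
  have hn : 0 < ‖u₀‖ := norm_pos_iff.mpr hu₀
  set c : 𝕜 := ((‖u₀‖⁻¹ : ℝ) : 𝕜) with hcdef
  set v : ZeroAtInftyContinuousMap Λ 𝕜 := c • u₀ with hvdef
  set eμ : ZeroAtInftyContinuousMap Λ 𝕜 := ee μ with heμdef
  have heμ1 : eμ μ = 1 := ee_self μ
  have heμ0 : ∀ ν : Λ, ν ≠ μ → eμ ν = 0 := fun ν hν => ee_ne hν
  have heμne : eμ ≠ 0 := ee_ne_zero μ
  have hvnorm : ‖v‖ = 1 := by
    rw [hvdef, norm_smul c u₀, hcdef, RCLike.norm_ofReal, abs_of_pos (inv_pos.mpr hn),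
      inv_mul_cancel₀ hn.ne']
  have hvμ : v μ = 0 := by
    rw [hvdef, ZeroAtInftyContinuousMap.smul_apply, h0, smul_zero]
  have hv : v ≠ 0 := by
    intro h
    rw [h, norm_zero] at hvnorm
    norm_num at hvnorm
  obtain ⟨lam, hlamM⟩ := Mset_nonempty hv
  have hlam : ‖v lam‖ = 1 := by
    rw [mem_Mset_iff] at hlamM
    rw [hlamM, hvnorm]
  have hlamμ : lam ≠ μ := by
    intro h
    rw [h, hvμ, norm_zero] at hlam
    norm_num at hlam
  -- domain computations
  have hcoordD : ∀ (s : 𝕜) (ν : Λ), ν ≠ μ → (v + s • eμ) ν = v ν := by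
    intro s ν hν
    rw [add_smul_apply, heμ0 ν hν, mul_zero, add_zero]
  have hcoordDμ : ∀ s : 𝕜, (v + s • eμ) μ = s := by
    intro s
    rw [add_smul_apply, hvμ, heμ1, mul_one, zero_add]
  have hnormD : ∀ s : 𝕜, ‖s‖ ≤ 1 → ‖v + s • eμ‖ = 1 := by
    intro s hs
    refine le_antisymm (norm_le_of _ zero_le_one fun ν => ?_) ?_
    · by_cases hν : ν = μ
      · subst hν; rw [hcoordDμ]; exact hs
      · rw [hcoordD s ν hν]
        calc ‖v ν‖ ≤ ‖v‖ := coord_le v ν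
          _ = 1 := hvnorm
    · have h := coord_le (v + s • eμ) lam
      rw [hcoordD s lam hlamμ, hlam] at h
      exact h
  have hlamD : ∀ s : 𝕜, ‖s‖ ≤ 1 → lam ∈ Mset (v + s • eμ) := by
    intro s hs
    rw [mem_Mset_iff, hcoordD s lam hlamμ, hlam, hnormD s hs]
  have hcoordE : ∀ (s : 𝕜) (ν : Λ), ν ≠ μ → (s • v + eμ) ν = s * v ν := by
    intro s ν hν
    rw [smul_add_apply, heμ0 ν hν, add_zero]
  have hcoordEμ : ∀ s : 𝕜, (s • v + eμ) μ = 1 := by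
    intro s
    rw [smul_add_apply, hvμ, mul_zero, heμ1, zero_add]
  have hnormE : ∀ s : 𝕜, ‖s‖ ≤ 1 → ‖s • v + eμ‖ = 1 := by
    intro s hs
    refine le_antisymm (norm_le_of _ zero_le_one fun ν => ?_) ?_
    · by_cases hν : ν = μ
      · subst hν; rw [hcoordEμ]; norm_num
      · rw [hcoordE s ν hν, norm_mul]
        calc ‖s‖ * ‖v ν‖ ≤ 1 * ‖v‖ := by
              refine mul_le_mul hs (coord_le v ν) (norm_nonneg _) zero_le_one
          _ = 1 := by rw [one_mul, hvnorm]
    · have h := coord_le (s • v + eμ) μ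
      rw [hcoordEμ, norm_one] at h
      exact h
  have hμE : ∀ s : 𝕜, ‖s‖ ≤ 1 → μ ∈ Mset (s • v + eμ) := by
    intro s hs
    rw [mem_Mset_iff, hcoordEμ, norm_one, hnormE s hs]
  have hDne : ∀ s : 𝕜, v + s • eμ ≠ 0 := by
    intro s
    apply ne_zero_of_coord (ν := lam)
    rw [hcoordD s lam hlamμ]
    intro h
    rw [h, norm_zero] at hlam
    norm_num at hlam
  have hEne : ∀ s : 𝕜, s • v + eμ ≠ 0 := by
    intro s
    apply ne_zero_of_coord (ν := μ)
    rw [hcoordEμ]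
    norm_num
  set x := T v with hxdef
  set y := T eμ with hydef
  have hTmap : ∀ s : 𝕜, T (v + s • eμ) = x + s • y := by
    intro s
    rw [map_add T v (s • eμ), map_smul T s eμ]
  have hTmap' : ∀ s : 𝕜, T (s • v + eμ) = s • x + y := by
    intro s
    rw [map_add T (s • v) eμ, map_smul T s v]
  have hxne : x ≠ 0 := fun h => hv (hinj v h)
  have hyne : y ≠ 0 := fun h => heμne (hinj _ h)
  have hxx : ∀ s s' : 𝕜, ‖s‖ ≤ 1 → ‖s'‖ ≤ 1 → (Mset (x + s•y) ∩ Mset (x + s'•y)).Nonempty := by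
    intro s s' hs hs'
    rw [← hTmap, ← hTmap]
    rw [hM_transfer T hb hinj (hDne s) (hDne s')]
    exact ⟨lam, hlamD s hs, hlamD s' hs'⟩
  have hyy : ∀ s s' : 𝕜, ‖s‖ ≤ 1 → ‖s'‖ ≤ 1 → (Mset (s•x + y) ∩ Mset (s'•x + y)).Nonempty := by
    intro s s' hs hs'
    rw [← hTmap', ← hTmap']
    rw [hM_transfer T hb hinj (hEne s) (hEne s')]
    exact ⟨μ, hμE s hs, hμE s' hs'⟩
  have hnot : ∀ s s' : 𝕜, ‖s‖ < 1 → ‖s'‖ < 1 → (Mset (x + s•y) ∩ Mset (s'•x + y)) = ∅ := by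
    intro s s' hs hs'
    rw [← hTmap, ← hTmap']
    rw [← Set.not_nonempty_iff_eq_empty]
    rw [hM_transfer T hb hinj (hDne s) (hEne s')]
    rintro ⟨ν, hν1, hν2⟩
    rw [mem_Mset_iff] at hν1 hν2
    by_cases hνμ : ν = μ
    · rw [hνμ, hcoordDμ s, hnormD s hs.le] at hν1
      rw [hν1] at hs
      exact lt_irrefl _ hs
    · rw [hcoordD s ν hνμ, hnormD s hs.le] at hν1
      rw [hcoordE s' ν hνμ, hnormE s' hs'.le, norm_mul, hν1, mul_one] at hν2
      rw [hν2] at hs'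
      exact lt_irrefl _ hs'
  have hbd : ∀ w : 𝕜, ‖w‖ = 1 → (Mset y ∩ Mset (x + w•y)).Nonempty := by
    intro w hw
    rw [← hTmap]
    rw [hM_transfer T hb hinj heμne (hDne w)]
    refine ⟨μ, ?_, ?_⟩
    · rw [heμdef, Mset_ee]; exact Set.mem_singleton _
    · rw [mem_Mset_iff, hcoordDμ, hnormD w hw.le, hw]
  have h2D := twoD hxne hyne hxx hyy hnot hbd
  have hxu : x = c • T u₀ := by
    rw [hxdef, hvdef, map_smul]
  rw [hxu, norm_smul c (T u₀), hcdef, RCLike.norm_ofReal, abs_of_pos (inv_pos.mpr hn)] at h2D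
  have hgoal : ‖T u₀‖ = ‖u₀‖ * ‖y‖ := by
    field_simp at h2D
    linarith
  exact hgoal

lemma gamma_const (hb : ∀ u v, ParallelPair 𝕜 (T u) (T v) ↔ ParallelPair 𝕜 u v)
    (hinj : ∀ u, T u = 0 → u = 0) (lam μ : Λ) :
    ‖T (ee lam)‖ = ‖T (ee μ)‖ := by
  by_cases h : lam = μ
  · rw [h]
  · have h0 : (ee lam : ZeroAtInftyContinuousMap Λ 𝕜) μ = 0 := ee_ne (Ne.symm h)
    have := normA T hb hinj (ee_ne_zero lam) h0
    rwa [norm_ee, one_mul] at this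

lemma norm_everywhere (hb : ∀ u v, ParallelPair 𝕜 (T u) (T v) ↔ ParallelPair 𝕜 u v)
    (hinj : ∀ u, T u = 0 → u = 0) (lam₀ : Λ) (u : ZeroAtInftyContinuousMap Λ 𝕜) :
    ‖T u‖ = ‖T (ee lam₀)‖ * ‖u‖ := by
  set γ := ‖T (ee lam₀)‖ with hγdef
  have hγpos : 0 < γ := by
    rw [hγdef]
    exact norm_pos_iff.mpr fun h => (ee_ne_zero lam₀) (hinj _ h)
  by_cases hu : u = 0
  · rw [hu, map_zero]; simp
  · have hun : 0 < ‖u‖ := norm_pos_iff.mpr hu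
    have key : ∀ ε : ℝ, 0 < ε → |‖T u‖ - γ * ‖u‖| ≤ ε * γ := by
      intro ε hε
      set m := min ε ‖u‖ with hmdef
      have hm : 0 < m := lt_min hε hun
      -- find μ with ‖u μ‖ < m
      have hfin := finite_ge u hm
      obtain ⟨μ, hμ⟩ := hfin.infinite_compl.nonempty
      have hμlt : ‖u μ‖ < m := by
        by_contra hcon
        push_neg at hcon
        exact hμ hcon
      set u₁ : ZeroAtInftyContinuousMap Λ 𝕜 := u - u μ • ee μ with hu₁def
      have hcoord1 : ∀ ν : Λ, ν ≠ μ → u₁ ν = u ν := by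
        intro ν hν
        rw [hu₁def, ZeroAtInftyContinuousMap.sub_apply,
          ZeroAtInftyContinuousMap.smul_apply, ee_ne hν, smul_zero, sub_zero]
      have hcoordμ : u₁ μ = 0 := by
        rw [hu₁def, ZeroAtInftyContinuousMap.sub_apply,
          ZeroAtInftyContinuousMap.smul_apply, ee_self, smul_eq_mul, mul_one, sub_self]
      have hμnotM : ‖u μ‖ < ‖u‖ := lt_of_lt_of_le hμlt (min_le_right _ _)
      obtain ⟨lam, hlamM⟩ := Mset_nonempty hu
      rw [mem_Mset_iff] at hlamM
      have hlamμ : lam ≠ μ := by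
        intro h
        rw [h] at hlamM
        rw [hlamM] at hμnotM
        exact lt_irrefl _ hμnotM
      have hnorm1 : ‖u₁‖ = ‖u‖ := by
        refine le_antisymm (norm_le_of _ (norm_nonneg u) fun ν => ?_) ?_
        · by_cases hν : ν = μ
          · subst hν; rw [hcoordμ, norm_zero]; exact norm_nonneg u
          · rw [hcoord1 ν hν]; exact coord_le u ν
        · have h := coord_le u₁ lam
          rwa [hcoord1 lam hlamμ, hlamM] at h
      have hu₁ne : u₁ ≠ 0 := by
        intro h
        rw [h, norm_zero] at hnorm1
        exact hun.ne' hnorm1.symm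
      have hA := normA T hb hinj hu₁ne hcoordμ
      have hγμ : ‖T (ee μ)‖ = γ := gamma_const T hb hinj μ lam₀
      rw [hγμ, hnorm1] at hA
      -- ‖T u - T u₁‖ = ‖u μ‖ * γ
      have hdiff : T u - T u₁ = u μ • T (ee μ) := by
        rw [hu₁def, map_sub, map_smul]
        abel
      have hdn : ‖T u - T u₁‖ = ‖u μ‖ * γ := by
        rw [hdiff, norm_smul (u μ) (T (ee μ)), hγμ]
      have habs := abs_norm_sub_norm_le (T u) (T u₁)
      rw [hdn, hA] at habs
      have hb1 : ‖u μ‖ * γ ≤ ε * γ := by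
        apply mul_le_mul_of_nonneg_right _ hγpos.le
        have : m ≤ ε := min_le_left _ _
        linarith
      calc |‖T u‖ - γ * ‖u‖| = |‖T u‖ - ‖u‖ * γ| := by rw [mul_comm]
        _ ≤ ‖u μ‖ * γ := habs
        _ ≤ ε * γ := hb1
    by_contra hne
    have habsne : 0 < |‖T u‖ - γ * ‖u‖| := by
      rw [abs_pos, sub_ne_zero]
      intro h
      exact hne (by rw [h])
    set D := |‖T u‖ - γ * ‖u‖| with hD
    have := key (D / (2*γ)) (by positivity)
    have heq : D / (2*γ) * γ = D / 2 := by field_simp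
    rw [heq] at this
    linarith

lemma core (hb : ∀ u v, ParallelPair 𝕜 (T u) (T v) ↔ ParallelPair 𝕜 u v) :
    ∃ γ : ℝ, 0 < γ ∧
      ∃ S : ZeroAtInftyContinuousMap Λ 𝕜 →ₗᵢ[𝕜] ZeroAtInftyContinuousMap Λ 𝕜,
        ∀ x, T x = (γ : 𝕜) • S x := by
  have hinj := inj_of_par T hb
  have hΛ : Nonempty Λ := inferInstance
  obtain ⟨lam₀⟩ := hΛ
  set γ := ‖T (ee lam₀)‖ with hγdef
  have hγpos : 0 < γ := by
    rw [hγdef]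
    exact norm_pos_iff.mpr fun h => (ee_ne_zero lam₀) (hinj _ h)
  have hnorm := norm_everywhere T hb hinj lam₀
  refine ⟨γ, hγpos, ⟨((γ⁻¹ : ℝ) : 𝕜) • T, ?_⟩, ?_⟩
  · intro u
    rw [LinearMap.smul_apply, norm_smul ((γ⁻¹:ℝ):𝕜) (T u), RCLike.norm_ofReal,
      abs_of_pos (inv_pos.mpr hγpos), hnorm u, ← hγdef]
    field_simp
  · intro u
    show T u = (γ:𝕜) • (((γ⁻¹ : ℝ) : 𝕜) • T) u
    rw [LinearMap.smul_apply, smul_smul]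
    rw [show ((γ:ℝ):𝕜) * ((γ⁻¹:ℝ):𝕜) = (((γ * γ⁻¹ : ℝ)):𝕜) by push_cast; ring]
    rw [mul_inv_cancel₀ hγpos.ne']
    rw [RCLike.ofReal_one, one_smul]

end Core

section Assembly

lemma par_iff_tea {E : Type*} [NormedAddCommGroup E] [NormedSpace 𝕜 E] (x y : E) :
    ParallelPair 𝕜 x y ↔ ∃ μ : 𝕜, ‖μ‖ = 1 ∧ TEAPair x (μ • y) := by
  unfold ParallelPair TEAPair
  constructor
  · rintro ⟨μ, h1, h2⟩
    exact ⟨μ, h1, by rw [norm_smul, h1, one_mul]; exact h2⟩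
  · rintro ⟨μ, h1, h2⟩
    refine ⟨μ, h1, ?_⟩
    rw [norm_smul, h1, one_mul] at h2
    exact h2

variable [Infinite Λ]
variable (T : ZeroAtInftyContinuousMap Λ 𝕜 →ₗ[𝕜] ZeroAtInftyContinuousMap Λ 𝕜)

lemma aToB (ha : ∀ u v, TEAPair (T u) (T v) ↔ TEAPair u v) :
    ∀ u v, ParallelPair 𝕜 (T u) (T v) ↔ ParallelPair 𝕜 u v := by
  intro u v
  rw [par_iff_tea, par_iff_tea]
  constructor
  · rintro ⟨μ, h1, h2⟩
    refine ⟨μ, h1, ?_⟩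
    rw [← map_smul T μ v] at h2
    exact (ha u (μ • v)).mp h2
  · rintro ⟨μ, h1, h2⟩
    refine ⟨μ, h1, ?_⟩
    rw [← map_smul T μ v]
    exact (ha u (μ • v)).mpr h2

lemma cToA (hc : ∃ γ : ℝ, 0 < γ ∧
      ∃ S : ZeroAtInftyContinuousMap Λ 𝕜 →ₗᵢ[𝕜] ZeroAtInftyContinuousMap Λ 𝕜,
        ∀ x, T x = (γ : 𝕜) • S x) :
    ∀ u v, TEAPair (T u) (T v) ↔ TEAPair u v := by
  obtain ⟨γ, hγ, S, hS⟩ := hc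
  have hnorm : ∀ u, ‖T u‖ = γ * ‖u‖ := by
    intro u
    rw [hS u, norm_smul ((γ:ℝ):𝕜) (S u), RCLike.norm_ofReal, abs_of_pos hγ, S.norm_map]
  intro u v
  unfold TEAPair
  rw [← map_add T u v, hnorm, hnorm, hnorm, ← mul_add]
  exact mul_right_inj' hγ.ne'

end Assembly


end C0Aux

/-- Let `Λ` be an infinite index set and `T : c₀(Λ) → c₀(Λ)` (realized as `C₀(Λ, 𝕜)` for
the discrete topology on `Λ`) a nonzero linear map.  The following are equivalent:
(a) `(Tu, Tv)` is a TEA pair iff `(u, v)` is a TEA pair, for all `u, v`;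
(b) `(Tu, Tv)` is a parallel pair iff `(u, v)` is a parallel pair, for all `u, v`;
(c) `T = γ S` for some `γ > 0` and a (not necessarily surjective) linear isometry `S`. -/
theorem c0_two_sided_preserver_iff {𝕜 : Type*} [RCLike 𝕜] {Λ : Type*}
    [TopologicalSpace Λ] [DiscreteTopology Λ] [Infinite Λ]
    (T : ZeroAtInftyContinuousMap Λ 𝕜 →ₗ[𝕜] ZeroAtInftyContinuousMap Λ 𝕜) (hT : T ≠ 0) :
    ((∀ u v : ZeroAtInftyContinuousMap Λ 𝕜, (TEAPair (T u) (T v) ↔ TEAPair u v)) ↔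
      (∀ u v : ZeroAtInftyContinuousMap Λ 𝕜,
        (ParallelPair 𝕜 (T u) (T v) ↔ ParallelPair 𝕜 u v))) ∧
    ((∀ u v : ZeroAtInftyContinuousMap Λ 𝕜, (TEAPair (T u) (T v) ↔ TEAPair u v)) ↔
      (∃ γ : ℝ, 0 < γ ∧
        ∃ S : ZeroAtInftyContinuousMap Λ 𝕜 →ₗᵢ[𝕜] ZeroAtInftyContinuousMap Λ 𝕜,
          ∀ x, T x = (γ : 𝕜) • S x)) := by
  constructor
  · constructor
    · intro ha
      exact C0Aux.aToB T ha
    · intro hbp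
      exact C0Aux.cToA T (C0Aux.core T hbp)
  · constructor
    · intro ha
      exact C0Aux.core T (C0Aux.aToB T ha)
    · intro hc
      exact C0Aux.cToA T hc
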